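/- Suppose F is a Kripke frame that is a finite lattice with least element w₀, and N is a Kripke model with reflexive and transitive accessibility relation. If u₀ is a world in N that admits at least |F|−1 many independent buttons, then there exists a frame labeling of F for (N,u₀). -/
import Mathlib


namespace GrzPaper

/-- Propositional modal formulas, built from variables, falsum, implication and box. -/
inductive Formula : Type
  | var : ℕ → Formula
  | fls : Formula
  | impl : Formula → Formula → Formula
  | box : Formula → Formula
deriving DecidableEq

namespace Formula

def neg (φ : Formula) : Formula := impl φ fls
def tru : Formula := neg fls
def disj (φ ψ : Formula) : Formula := impl (neg φ) ψ
def conj (φ ψ : Formula) : Formula := neg (impl φ (neg ψ))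
def dia (φ : Formula) : Formula := neg (box (neg φ))

/-- Uniform substitution. -/
def subst (σ : ℕ → Formula) : Formula → Formula
  | var n => σ n
  | fls => fls
  | impl a b => impl (subst σ a) (subst σ b)
  | box a => box (subst σ a)

/-- Propositional (Boolean) evaluation, treating variables and boxed formulas as atoms. -/
def evalProp (v : Formula → Bool) : Formula → Bool
  | var n => v (var n)
  | fls => false
  | impl a b => !(evalProp v a) || evalProp v b
  | box a => v (box a)

/-- A propositional tautology: true under every Boolean valuation of the atoms
(variables and boxed subformulas). -/
def Tautology (φ : Formula) : Prop := ∀ v, evalProp v φ = true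

end Formula

open Formula

/-- A normal modal logic: contains all propositional tautologies and all instances of K,
closed under modus ponens, necessitation and uniform substitution. -/
structure IsNormalLogic (L : Set Formula) : Prop where
  taut : ∀ φ, Tautology φ → φ ∈ L
  axK : ∀ φ ψ, impl (box (impl φ ψ)) (impl (box φ) (box ψ)) ∈ L
  mp : ∀ φ ψ, impl φ ψ ∈ L → φ ∈ L → ψ ∈ L
  nec : ∀ φ, φ ∈ L → box φ ∈ L
  subst : ∀ φ σ, φ ∈ L → φ.subst σ ∈ L

/-- The normal modal logic generated by a set of axioms: the smallest normal modal
logic containing them. -/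
def Generated (Ax : Set Formula) : Set Formula :=
  ⋂₀ {L | IsNormalLogic L ∧ Ax ⊆ L}

def pv : Formula := var 0
def qv : Formula := var 1

def axT : Formula := impl (box pv) pv
def axFour : Formula := impl (box pv) (box (box pv))
def axGrz : Formula := impl (box (impl (box (impl pv (box pv))) pv)) pv
def axPoint2 : Formula := impl (dia (box pv)) (box (dia pv))
def axPoint3 : Formula := disj (box (impl (box pv) qv)) (box (impl (box qv) pv))

/-- penultimate(φ) : φ ∧ ◇¬φ ∧ □(¬φ → □¬φ). -/
def penultimate (φ : Formula) : Formula :=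
  conj φ (conj (dia (neg φ)) (box (impl (neg φ) (box (neg φ)))))

/-- contingent(φ) : ◇φ ∧ ◇¬φ. -/
def contingent (φ : Formula) : Formula := conj (dia φ) (dia (neg φ))

/-- The axiom Grz* : contingent(p) → ◇(penultimate(p) ∨ penultimate(¬p)). -/
def axGrzStar : Formula :=
  impl (contingent pv) (dia (disj (penultimate pv) (penultimate (neg pv))))

def Grz : Set Formula := Generated {axGrz}
def GrzStarLogic : Set Formula := Generated {axGrzStar}
def S4GrzStar : Set Formula := Generated {axT, axFour, axGrzStar}
def Grz2 : Set Formula := Generated {axGrz, axPoint2}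
def Grz3 : Set Formula := Generated {axGrz, axPoint3}
def KLogic : Set Formula := Generated ∅

/-- A Kripke model: an accessibility relation together with a valuation. -/
structure KripkeModel (W : Type) where
  rel : W → W → Prop
  val : ℕ → W → Prop

/-- Satisfaction of a modal formula at a world of a Kripke model. -/
def Satisfies {W : Type} (M : KripkeModel W) : W → Formula → Prop
  | w, .var n => M.val n w
  | _, .fls => False
  | w, .impl a b => Satisfies M w a → Satisfies M w b
  | w, .box a => ∀ v, M.rel w v → Satisfies M v a

/-- Validity of a formula on a Kripke frame. -/
def ValidOnFrame (W : Type) (R : W → W → Prop) (φ : Formula) : Prop :=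
  ∀ (val : ℕ → W → Prop) (w : W), Satisfies ⟨R, val⟩ w φ

/-- A model labeling of (M,w₀) for (N,u₀): a substitution σ such that every formula is
true at (M,w₀) iff its σ-instance is true at (N,u₀). -/
def ModelLabeling {W U : Type} (M : KripkeModel W) (w0 : W) (N : KripkeModel U) (u0 : U)
    (σ : ℕ → Formula) : Prop :=
  ∀ φ : Formula, Satisfies M w0 φ ↔ Satisfies N u0 (φ.subst σ)

/-- A frame labeling of the frame (W,R) with initial node w₀ for the pointed model (N,u₀). -/
def FrameLabeling {W U : Type} (R : W → W → Prop) (w0 : W) (N : KripkeModel U) (u0 : U)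
    (Φ : W → Formula) : Prop :=
  Satisfies N u0 (Φ w0) ∧
  (∀ u, N.rel u0 u → ∀ w, Satisfies N u (Φ w) →
    ∀ w', (Satisfies N u (dia (Φ w')) ↔ R w w')) ∧
  (∀ u, N.rel u0 u → ∃! w, Satisfies N u (Φ w))

def bigOr : List Formula → Formula
  | [] => fls
  | φ :: l => disj φ (bigOr l)

def bigAnd : List Formula → Formula
  | [] => tru
  | φ :: l => conj φ (bigAnd l)

open Classical in
/-- The disjunction ⋁ {Φ w : P w}. -/
noncomputable def labelFormula {W : Type} [Fintype W] (Φ : W → Formula) (P : W → Prop) :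
    Formula :=
  bigOr ((Finset.univ.filter P).toList.map Φ)

/-- Θ_A : the formula asserting that the button pattern is exactly A. -/
noncomputable def Theta {n : ℕ} (b : Fin n → Formula) (A : Finset (Fin n)) : Formula :=
  bigAnd ((Finset.univ : Finset (Fin n)).toList.map
    (fun i => if i ∈ A then box (b i) else neg (box (b i))))

/-- b₀,…,b_{n−1} are independent buttons at u₀: none is pushed (necessary) at u₀, and
necessarily, whenever the button pattern is exactly A, every larger pattern is possible. -/
def IndependentButtons {U : Type} (N : KripkeModel U) (u0 : U) {n : ℕ}
    (b : Fin n → Formula) : Prop :=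
  (∀ i, ¬ Satisfies N u0 (box (b i))) ∧
  ∀ A : Finset (Fin n), ∀ u, N.rel u0 u → Satisfies N u (Theta b A) →
    ∀ A' : Finset (Fin n), A ⊆ A' → Satisfies N u (dia (Theta b A'))

/-- r₀,…,r_{n−1} form a ratchet of length n at u₀. -/
def Ratchet {U : Type} (N : KripkeModel U) (u0 : U) {n : ℕ} (r : Fin n → Formula) : Prop :=
  (∀ i : Fin n, (i.val = 0 → Satisfies N u0 (box (r i))) ∧
      (0 < i.val → ¬ Satisfies N u0 (box (r i)))) ∧
  (∀ u, N.rel u0 u → ∀ i j : Fin n, i < j →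
      Satisfies N u (box (r j)) → Satisfies N u (box (r i))) ∧
  (∀ u, N.rel u0 u → ∀ i : Fin n, 0 < i.val →
      (∀ j : Fin n, Satisfies N u (box (r j)) ↔ j < i) →
        ∃ v, N.rel u v ∧ ∀ j : Fin n, Satisfies N v (box (r j)) ↔ j ≤ i)

/-- A (finite) tree order: a partial order with a least element in which the set of
predecessors of every element is linearly ordered. -/
def IsTreeOrder {W : Type} (R : W → W → Prop) : Prop :=
  IsPartialOrder W R ∧ (∃ r, ∀ x, R r x) ∧ ∀ x a b, R a x → R b x → R a b ∨ R b a

/-- A baled tree order: a partial order with a greatest element t whose removal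
leaves a tree. -/
def IsBaledTreeOrder {W : Type} (R : W → W → Prop) : Prop :=
  IsPartialOrder W R ∧ ∃ t : W, (∀ x, R x t) ∧
    (∃ r, r ≠ t ∧ ∀ x, x ≠ t → R r x) ∧
    (∀ x a b, x ≠ t → R a x → R b x → R a b ∨ R b a)

/-- Height of a node: the number of its strict predecessors. -/
noncomputable def heightOf {W : Type} (R : W → W → Prop) (x : W) : ℕ :=
  Nat.card {y : W // R y x ∧ y ≠ x}

/-- y is an immediate successor of x. -/
def ImmSucc {W : Type} (R : W → W → Prop) (x y : W) : Prop :=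
  R x y ∧ x ≠ y ∧ ∀ z, R x z → R z y → z = x ∨ z = y

def IsMaximal {W : Type} (R : W → W → Prop) (x : W) : Prop := ∀ z, R x z → z = x

/-- A regular finite tree: all maximal elements have the same height, and any two
elements of the same height have the same number of immediate successors. -/
def IsRegularTree {W : Type} (R : W → W → Prop) : Prop :=
  IsTreeOrder R ∧
  (∀ x y, IsMaximal R x → IsMaximal R y → heightOf R x = heightOf R y) ∧
  (∀ x y, heightOf R x = heightOf R y →
    Nat.card {z : W // ImmSucc R x z} = Nat.card {z : W // ImmSucc R y z})


section Aux

open Formula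

variable {U : Type} (N : KripkeModel U)

lemma sat_impl (u : U) (φ ψ : Formula) :
    Satisfies N u (impl φ ψ) ↔ (Satisfies N u φ → Satisfies N u ψ) := Iff.rfl

lemma sat_fls (u : U) : ¬ Satisfies N u fls := fun h => h

lemma sat_neg (u : U) (φ : Formula) :
    Satisfies N u (neg φ) ↔ ¬ Satisfies N u φ := Iff.rfl

lemma sat_box (u : U) (φ : Formula) :
    Satisfies N u (box φ) ↔ ∀ v, N.rel u v → Satisfies N v φ := Iff.rfl

lemma sat_conj (u : U) (φ ψ : Formula) :
    Satisfies N u (conj φ ψ) ↔ Satisfies N u φ ∧ Satisfies N u ψ := by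
  simp only [conj, sat_neg, sat_impl]; tauto

lemma sat_disj (u : U) (φ ψ : Formula) :
    Satisfies N u (disj φ ψ) ↔ Satisfies N u φ ∨ Satisfies N u ψ := by
  simp only [disj, sat_neg, sat_impl]; tauto

lemma sat_dia (u : U) (φ : Formula) :
    Satisfies N u (dia φ) ↔ ∃ v, N.rel u v ∧ Satisfies N v φ := by
  simp only [dia, sat_neg, sat_box]
  push_neg
  tauto

lemma sat_bigAnd (u : U) (l : List Formula) :
    Satisfies N u (bigAnd l) ↔ ∀ φ ∈ l, Satisfies N u φ := by
  induction l with
  | nil => simp [bigAnd, tru, sat_neg, sat_fls]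
  | cons φ l ih => simp [bigAnd, sat_conj, ih]

lemma sat_bigOr (u : U) (l : List Formula) :
    Satisfies N u (bigOr l) ↔ ∃ φ ∈ l, Satisfies N u φ := by
  induction l with
  | nil => simp [bigOr, sat_fls]
  | cons φ l ih => simp [bigOr, sat_disj, ih]

lemma sat_label {W : Type} [Fintype W] (u : U) (Φ : W → Formula) (P : W → Prop) :
    Satisfies N u (labelFormula Φ P) ↔ ∃ w, P w ∧ Satisfies N u (Φ w) := by
  classical
  simp only [labelFormula, sat_bigOr, List.mem_map, Finset.mem_toList, Finset.mem_filter,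
    Finset.mem_univ, true_and]
  constructor
  · rintro ⟨ψ, ⟨w, hw, rfl⟩, h⟩; exact ⟨w, hw, h⟩
  · rintro ⟨w, hw, h⟩; exact ⟨Φ w, ⟨w, hw, rfl⟩, h⟩

lemma sat_Theta (u : U) {n : ℕ} (b : Fin n → Formula) (A : Finset (Fin n)) :
    Satisfies N u (Theta b A) ↔ ∀ i, (i ∈ A ↔ Satisfies N u (box (b i))) := by
  classical
  simp only [Theta, sat_bigAnd, List.mem_map, Finset.mem_toList, Finset.mem_univ, true_and]
  constructor
  · intro h i
    have := h _ ⟨i, rfl⟩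
    by_cases hi : i ∈ A
    · simp only [hi, if_pos] at this
      simpa [hi] using this
    · simp only [hi, if_neg, not_false_iff] at this
      rw [sat_neg] at this
      simp [hi, this]
  · rintro h ψ ⟨i, rfl⟩
    by_cases hi : i ∈ A
    · simpa [hi] using (h i).1 hi
    · simp only [hi, if_neg, not_false_iff]
      rw [sat_neg]
      exact fun hc => hi ((h i).2 hc)

end Aux

/-- If F is a finite lattice with least element w₀ and u₀ admits at least
|F|−1 many independent buttons in a reflexive transitive model N, then there is a frame
labeling of F for (N,u₀). -/

theorem statement12 {W U : Type} [Fintype W] [Lattice W] (w0 : W) (hw0 : ∀ x, w0 ≤ x)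
    (N : KripkeModel U) (hrefl : Reflexive N.rel) (htrans : Transitive N.rel) (u0 : U)
    (hb : ∃ m : ℕ, Fintype.card W - 1 ≤ m ∧
        ∃ b : Fin m → Formula, IndependentButtons N u0 b) :
    ∃ Φ : W → Formula, FrameLabeling (· ≤ ·) w0 N u0 Φ := by
  classical
  letI : OrderBot W := { bot := w0, bot_le := hw0 }
  obtain ⟨m, hm, b, hb0, hbind⟩ := hb
  -- an embedding of W∖{w0} into Fin m
  have hcard : Fintype.card {x : W // x ≠ w0} ≤ Fintype.card (Fin m) := by
    rw [Fintype.card_fin]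
    calc Fintype.card {x : W // x ≠ w0}
        = Fintype.card W - Fintype.card {x : W // x = w0} :=
          Fintype.card_subtype_compl _
      _ = Fintype.card W - 1 := by rw [Fintype.card_subtype_eq]
      _ ≤ m := hm
  obtain ⟨e⟩ := Function.Embedding.nonempty_of_card_le hcard
  -- the button pattern at a world
  set Au : U → Finset (Fin m) :=
    fun u => Finset.univ.filter (fun i => Satisfies N u (box (b i))) with hAu
  -- the lattice element coded by a pattern
  set j : Finset (Fin m) → W :=
    fun A => (Finset.univ.filter (fun x : {x : W // x ≠ w0} => e x ∈ A)).sup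
      (fun x => (x : W)) with hj
  have hsatAu : ∀ u, Satisfies N u (Theta b (Au u)) := by
    intro u
    rw [sat_Theta]
    intro i
    simp [hAu]
  have hThetaEq : ∀ u A, Satisfies N u (Theta b A) → A = Au u := by
    intro u A h
    rw [sat_Theta] at h
    ext i
    simp [hAu, h i]
  have hjmono : ∀ A A' : Finset (Fin m), A ⊆ A' → j A ≤ j A' := by
    intro A A' hAA
    apply Finset.sup_mono
    intro x hx
    simp only [Finset.mem_filter, Finset.mem_univ, true_and] at *
    exact hAA hx
  have hAmono : ∀ u v, N.rel u v → Au u ⊆ Au v := by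
    intro u v huv i hi
    simp only [hAu, Finset.mem_filter, Finset.mem_univ, true_and, sat_box] at *
    exact fun w hw => hi w (htrans huv hw)
  -- the set of buttons below w'
  set S : W → Finset (Fin m) :=
    fun w' => (Finset.univ.filter (fun x : {x : W // x ≠ w0} => (x : W) ≤ w')).image e
      with hS
  have hsupS : ∀ w' : W, j (S w') = w' := by
    intro w'
    apply le_antisymm
    · apply Finset.sup_le
      rintro x hx
      rw [Finset.mem_filter] at hx
      replace hx := hx.2
      rw [hS] at hx
      simp only [Finset.mem_image, Finset.mem_filter, Finset.mem_univ, true_and] at hx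
      obtain ⟨y, hy, hey⟩ := hx
      have : y = x := e.injective hey
      rw [← this]; exact hy
    · by_cases hw' : w' = w0
      · subst hw'; exact hw0 _
      · refine Finset.le_sup (f := fun x : {x : W // x ≠ w0} => (x : W))
          (b := ⟨w', hw'⟩) ?_
        simp only [hS, Finset.mem_image, Finset.mem_filter, Finset.mem_univ, true_and]
        exact ⟨⟨w', hw'⟩, le_refl w', rfl⟩
  have hjunion : ∀ (A : Finset (Fin m)) (w' : W), j (A ∪ S w') = j A ⊔ w' := by
    intro A w'
    have : (Finset.univ.filter (fun x : {x : W // x ≠ w0} => e x ∈ A ∪ S w')) =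
        (Finset.univ.filter (fun x : {x : W // x ≠ w0} => e x ∈ A)) ∪
        (Finset.univ.filter (fun x : {x : W // x ≠ w0} => e x ∈ S w')) := by
      ext x
      simp only [Finset.mem_filter, Finset.mem_univ, true_and, Finset.mem_union]
    simp only [hj]
    rw [this, Finset.sup_union]
    congr 1
    exact hsupS w'
  -- the labeling
  refine ⟨fun w => labelFormula (fun A : Finset (Fin m) => Theta b A) (fun A => j A = w),
    ?_, ?_, ?_⟩
  · -- Φ w0 holds at u0
    simp only [sat_label]
    refine ⟨Au u0, ?_, hsatAu u0⟩
    have : Au u0 = ∅ := by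
      ext i
      simp [hAu, hb0 i]
    rw [this]
    simp only [hj]
    have : (Finset.univ.filter (fun x : {x : W // x ≠ w0} => e x ∈ (∅ : Finset (Fin m)))) = ∅ := by
      simp
    rw [this, Finset.sup_empty]
    rfl
  · -- accessibility condition
    intro u hu w hw w'
    simp only [sat_label] at hw
    obtain ⟨A, hjA, hA⟩ := hw
    have hAeq : A = Au u := hThetaEq u A hA
    subst hAeq
    constructor
    · intro h
      rw [sat_dia] at h
      obtain ⟨v, huv, hv⟩ := h
      simp only [sat_label] at hv
      obtain ⟨A', hjA', hA'⟩ := hv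
      have : A' = Au v := hThetaEq v A' hA'
      subst this
      rw [← hjA, ← hjA']
      exact hjmono _ _ (hAmono u v huv)
    · intro hle
      have hsub : Au u ⊆ Au u ∪ S w' := Finset.subset_union_left
      have hdia := hbind (Au u) u hu (hsatAu u) (Au u ∪ S w') hsub
      rw [sat_dia] at hdia
      obtain ⟨v, huv, hv⟩ := hdia
      have hAv : Au u ∪ S w' = Au v := hThetaEq v _ hv
      rw [sat_dia]
      refine ⟨v, huv, ?_⟩
      simp only [sat_label]
      refine ⟨Au v, ?_, hsatAu v⟩
      rw [← hAv, hjunion]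
      rw [hjA]
      exact sup_eq_right.mpr hle
  · -- uniqueness
    intro u hu
    refine ⟨j (Au u), ?_, ?_⟩
    · simp only [sat_label]
      exact ⟨Au u, rfl, hsatAu u⟩
    · intro w hw
      simp only [sat_label] at hw
      obtain ⟨A, hjA, hA⟩ := hw
      rw [← hjA, hThetaEq u A hA]


end GrzPaper
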